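/- Let R > 0, let m ≥ 1 be an integer, and let v : [0,R] → ℝ satisfy Assumption 1.1. Then there exist constants C₀ > 0 and δ₀ > 0 such that for every λ ∈ ℝ and every δ ∈ (0, δ₀], the one-dimensional Lebesgue measure of the set E_{λ,δ} is at most C₀ δ. -/

import Mathlib

/-!
Van der Corput's sublevel set estimate: if `|g⁽ⁿ⁾| ≥ c` on an interval, then `{|g| < c εⁿ}` has
measure at most `4ⁿ ε`. By Darboux `g⁽ⁿ⁾` has constant sign, so `g⁽ⁿ⁻¹⁾` is monotone with slope at
least `c`: the strip `{|g⁽ⁿ⁻¹⁾| < c ε}` has length at most `2 ε`, and off the strip `|g⁽ⁿ⁻¹⁾| ≥ c ε`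
on two intervals, where induction applies.

For the theorem, compactness of `[0,R]` and the nondegeneracy of `v` give finitely many balls on
each of which some `|v⁽ⁿ⁾|`, `1 ≤ n ≤ m`, is at least a uniform `c > 0`. As `v` is `K`-Lipschitz,
`E_{λ,δ} ⊆ {|v - λ| < (K + 1) δᵐ}`, and `(K + 1) δᵐ ≤ c (B δ)ⁿ` for `δ ≤ 1` and a suitable `B`, so
each ball contributes `O(δ)`.
-/

open MeasureTheory

noncomputable section

/-- Assumption 1.1: `v` is `Cᵐ` on `[0,R]` and its first `m` derivatives
do not vanish simultaneously. -/
def GoodProfile (R : ℝ) (m : ℕ) (v : ℝ → ℝ) : Prop :=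
  ContDiffOn ℝ m v (Set.Icc 0 R) ∧
    ∀ r ∈ Set.Icc (0 : ℝ) R, ∑ n ∈ Finset.Icc 1 m, |iteratedDerivWithin n v (Set.Icc 0 R) r| ≠ 0

/-- `E'_{λ,δ} = {r ∈ [0,R] : |v(r) - λ| < δ^m}`. -/
def Eset' (R : ℝ) (m : ℕ) (v : ℝ → ℝ) (lam δ : ℝ) : Set ℝ :=
  {r ∈ Set.Icc (0 : ℝ) R | |v r - lam| < δ ^ m}

/-- `E_{λ,δ} = {r ∈ [0,R] : dist(r, E'_{λ,δ}) < δ^m}`. -/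
def Eset (R : ℝ) (m : ℕ) (v : ℝ → ℝ) (lam δ : ℝ) : Set ℝ :=
  {r ∈ Set.Icc (0 : ℝ) R |
    EMetric.infEdist r (Eset' R m v lam δ) < ENNReal.ofReal (δ ^ m)}

open Set Metric Finset

theorem MonotoneOn.ordConnected_sep_le_apply {α β : Type*} [Preorder α] [Preorder β] {s : Set α}
    (hs : s.OrdConnected) {h : α → β} (hh : MonotoneOn h s) (a : β) :
    {x ∈ s | a ≤ h x}.OrdConnected :=
  ⟨fun _ hx _ hy _ hz =>
    ⟨hs.out hx.1 hy.1 hz, hx.2.trans (hh hx.1 (hs.out hx.1 hy.1 hz) hz.1)⟩⟩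

theorem MonotoneOn.ordConnected_sep_apply_le {α β : Type*} [Preorder α] [Preorder β] {s : Set α}
    (hs : s.OrdConnected) {h : α → β} (hh : MonotoneOn h s) (a : β) :
    {x ∈ s | h x ≤ a}.OrdConnected :=
  ⟨fun _ hx _ hy _ hz =>
    ⟨hs.out hx.1 hy.1 hz, (hh (hs.out hx.1 hy.1 hz) hy.1 hz.2).trans hy.2⟩⟩

theorem Set.OrdConnected.mul_sub_le_image_sub_of_le_hasDerivWithinAt {s : Set ℝ}
    (hs : s.OrdConnected) {g g' : ℝ → ℝ} (hg : ∀ x ∈ s, HasDerivWithinAt g (g' x) s x) {c : ℝ}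
    (hc : ∀ x ∈ s, c ≤ g' x) {x y : ℝ} (hx : x ∈ s) (hy : y ∈ s) (hxy : x ≤ y) :
    c * (y - x) ≤ g y - g x := by
  have hmono : MonotoneOn (fun z => g z - c * z) s := by
    refine monotoneOn_of_hasDerivWithinAt_nonneg hs.convex
      (fun z hz => ((hg z hz).sub ((hasDerivWithinAt_id z s).const_mul c)).continuousWithinAt)
      (fun z hz => (((hg z (interior_subset hz)).mono interior_subset).sub
        ((hasDerivWithinAt_id z _).const_mul c))) fun z hz => ?_
    simpa using hc z (interior_subset hz)
  have := hmono hx hy hxy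
  simp only at this
  linarith

theorem Set.OrdConnected.forall_le_or_forall_le_neg_of_le_abs {s : Set ℝ} (hs : s.OrdConnected)
    {g g' : ℝ → ℝ} (hg : ∀ x ∈ s, HasDerivWithinAt g (g' x) s x) {c : ℝ} (hc : 0 < c)
    (hg' : ∀ x ∈ s, c ≤ |g' x|) :
    (∀ x ∈ s, c ≤ g' x) ∨ ∀ x ∈ s, g' x ≤ -c := by
  have hne : ∀ x ∈ s, g' x ≠ 0 := fun x hx h => by linarith [hg' x hx, abs_eq_zero.2 h]
  rcases hasDerivWithinAt_forall_lt_or_forall_gt_of_forall_ne hs.convex hg hne with hneg | hpos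
  · exact .inr fun x hx => by linarith [hg' x hx, abs_of_neg (hneg x hx)]
  · exact .inl fun x hx => by linarith [hg' x hx, abs_of_pos (hpos x hx)]

theorem volume_setOf_abs_lt_le_of_mul_sub_le {s : Set ℝ} {g : ℝ → ℝ} {c : ℝ} (hc : 0 < c)
    (hg : ∀ x ∈ s, ∀ y ∈ s, x ≤ y → c * (y - x) ≤ g y - g x) (ε : ℝ) :
    volume {x ∈ s | |g x| < c * ε} ≤ ENNReal.ofReal (2 * ε) := by
  refine (Real.volume_le_diam _).trans (ediam_le fun x hx y hy => ?_)
  wlog hxy : x ≤ y generalizing x y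
  · rw [edist_comm]
    exact this y hy x hx (le_of_not_ge hxy)
  rw [edist_dist, Real.dist_eq, abs_sub_comm, abs_of_nonneg (sub_nonneg.2 hxy)]
  refine ENNReal.ofReal_le_ofReal (le_of_lt (lt_of_mul_lt_mul_left ?_ hc.le))
  linarith [hg x hx.1 y hy.1 hxy, abs_lt.1 hx.2, abs_lt.1 hy.2]

theorem volume_setOf_abs_lt_le_of_le_abs_hasDerivWithinAt (n : ℕ) {G : ℕ → ℝ → ℝ} {s : Set ℝ}
    (hs : s.OrdConnected) {c ε : ℝ} (hc : 0 < c) (hε : 0 < ε)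
    (hG : ∀ k < n, ∀ x ∈ s, HasDerivWithinAt (G k) (G (k + 1) x) s x)
    (hGn : ∀ x ∈ s, c ≤ |G n x|) :
    volume {x ∈ s | |G 0 x| < c * ε ^ n} ≤ ENNReal.ofReal (4 ^ n * ε) := by
  induction n generalizing G s c with
  | zero =>
    rw [pow_zero, mul_one, sep_eq_empty_iff_mem_false.2 fun x hx => (hGn x hx).not_gt,
      measure_empty]
    exact bot_le
  | succ n ih =>
    wlog hpos : ∀ x ∈ s, c ≤ G (n + 1) x generalizing G
    · have hneg :=
        (hs.forall_le_or_forall_le_neg_of_le_abs (hG n n.lt_succ_self) hc hGn).resolve_left hpos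
      simpa using this (G := fun k x => -G k x) (fun k hk x hx => (hG k hk x hx).neg)
        (by simpa using hGn) fun x hx => le_neg_of_le_neg (hneg x hx)
    set ρ := c * ε
    have hslope (x) (hx : x ∈ s) (y) (hy : y ∈ s) (hxy : x ≤ y) : c * (y - x) ≤ G n y - G n x :=
      hs.mul_sub_le_image_sub_of_le_hasDerivWithinAt (hG n n.lt_succ_self) hpos hx hy hxy
    have hmono : MonotoneOn (G n) s := fun x hx y hy hxy => by
      nlinarith [hslope x hx y hy hxy]
    have hblock {S : Set ℝ} (hS : S.OrdConnected) (hSs : S ⊆ s) (hρS : ∀ x ∈ S, ρ ≤ |G n x|) :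
        volume {x ∈ S | |G 0 x| < c * ε ^ (n + 1)} ≤ ENNReal.ofReal (4 ^ n * ε) := by
      rw [pow_succ', ← mul_assoc]
      exact ih hS (mul_pos hc hε) (fun k hk x hx => (hG k (by omega) x (hSs hx)).mono hSs) hρS
    set S := {x ∈ s | ρ ≤ G n x}
    set T := {x ∈ s | G n x ≤ -ρ}
    have hS := hblock (hmono.ordConnected_sep_le_apply hs ρ) (sep_subset _ _)
      fun x hx => hx.2.trans (le_abs_self _)
    have hT := hblock (hmono.ordConnected_sep_apply_le hs (-ρ)) (sep_subset _ _)
      fun x hx => (le_neg_of_le_neg hx.2).trans (neg_le_abs _)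
    have hstrip := volume_setOf_abs_lt_le_of_mul_sub_le hc hslope ε
    have hcover : {x ∈ s | |G 0 x| < c * ε ^ (n + 1)} ⊆
        {x ∈ s | |G n x| < ρ} ∪ {x ∈ S | |G 0 x| < c * ε ^ (n + 1)} ∪
          {x ∈ T | |G 0 x| < c * ε ^ (n + 1)} := by
      rintro x ⟨hx, hx0⟩
      rcases lt_or_ge |G n x| ρ with h | h
      · exact .inl (.inl ⟨hx, h⟩)
      rcases le_abs'.1 h with h | h
      · exact .inr ⟨⟨hx, h⟩, hx0⟩
      · exact .inl (.inr ⟨⟨hx, h⟩, hx0⟩)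
    calc volume {x ∈ s | |G 0 x| < c * ε ^ (n + 1)}
        ≤ ENNReal.ofReal (2 * ε) + ENNReal.ofReal (4 ^ n * ε) + ENNReal.ofReal (4 ^ n * ε) :=
          (measure_mono hcover).trans <| (measure_union_le _ _).trans <|
            add_le_add ((measure_union_le _ _).trans (add_le_add hstrip hS)) hT
      _ ≤ ENNReal.ofReal (4 ^ (n + 1) * ε) := by
        rw [← ENNReal.ofReal_add (by positivity) (by positivity),
          ← ENNReal.ofReal_add (by positivity) (by positivity), pow_succ]
        refine ENNReal.ofReal_le_ofReal ?_
        nlinarith [one_le_pow₀ (M₀ := ℝ) (n := n) (by norm_num : (1 : ℝ) ≤ 4)]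

theorem ContDiffOn.hasDerivWithinAt_iteratedDerivWithin {f : ℝ → ℝ} {s : Set ℝ} {n : ℕ}
    (hf : ContDiffOn ℝ n f s) (hs : UniqueDiffOn ℝ s) {k : ℕ} (hk : k < n) {x : ℝ} (hx : x ∈ s) :
    HasDerivWithinAt (iteratedDerivWithin k f s) (iteratedDerivWithin (k + 1) f s x) s x := by
  rw [iteratedDerivWithin_succ]
  exact ((hf.differentiableOn_iteratedDerivWithin (by exact_mod_cast hk) hs) x hx).hasDerivWithinAt

theorem ContDiffOn.volume_setOf_abs_sub_lt_le {v : ℝ → ℝ} {I s : Set ℝ} {m n : ℕ}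
    (hv : ContDiffOn ℝ m v I) (hI : UniqueDiffOn ℝ I) (hs : s.OrdConnected) (hsI : s ⊆ I)
    (hn : 0 < n) (hnm : n ≤ m) {c : ℝ} (hc : 0 < c)
    (hvn : ∀ x ∈ s, c ≤ |iteratedDerivWithin n v I x|) (lam : ℝ) {A B δ : ℝ} (hB : 1 ≤ B)
    (hAB : A ≤ c * B) (hδ : 0 < δ) (hδ1 : δ ≤ 1) :
    volume {x ∈ s | |v x - lam| < A * δ ^ m} ≤ ENNReal.ofReal (4 ^ m * B * δ) := by
  have hg : ContDiffOn ℝ m (fun x => -lam + v x) I := contDiffOn_const.add hv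
  have hsub : {x ∈ s | |v x - lam| < A * δ ^ m} ⊆
      {x ∈ s | |iteratedDerivWithin 0 (fun x => -lam + v x) I x| < c * (B * δ) ^ n} := by
    rintro x ⟨hx, hxv⟩
    refine ⟨hx, ?_⟩
    calc |iteratedDerivWithin 0 (fun x => -lam + v x) I x| = |v x - lam| := by
          rw [iteratedDerivWithin_zero, neg_add_eq_sub]
      _ < A * δ ^ m := hxv
      _ ≤ c * B * δ ^ m := by gcongr
      _ ≤ c * B * δ ^ n :=
          mul_le_mul_of_nonneg_left (pow_le_pow_of_le_one hδ.le hδ1 hnm) (by positivity)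
      _ ≤ c * (B * δ) ^ n := by
          rw [mul_pow, ← mul_assoc]
          gcongr
          exact le_self_pow₀ hB hn.ne'
  refine (measure_mono hsub).trans <|
    (volume_setOf_abs_lt_le_of_le_abs_hasDerivWithinAt n hs hc (by positivity)
      (fun k hk x hx => (hg.hasDerivWithinAt_iteratedDerivWithin hI
        (hk.trans_le (by exact_mod_cast hnm)) (hsI hx)).mono hsI)
      fun x hx => by rw [iteratedDerivWithin_const_add hn]; exact hvn x hx).trans ?_
  refine ENNReal.ofReal_le_ofReal ?_
  rw [← mul_assoc]
  gcongr
  norm_num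

theorem eset_subset_of_lipschitzOnWith {R : ℝ} {m : ℕ} {v : ℝ → ℝ} {K : NNReal}
    (hv : LipschitzOnWith K v (Icc 0 R)) (lam δ : ℝ) :
    Eset R m v lam δ ⊆ {x ∈ Icc 0 R | |v x - lam| < (K + 1) * δ ^ m} := by
  rintro x ⟨hx, hxE⟩
  obtain ⟨y, ⟨hy, hyv⟩, hxy⟩ := infEDist_lt_iff.1 hxE
  have hxy : dist x y < δ ^ m := edist_lt_ofReal.1 hxy
  refine ⟨hx, ?_⟩
  calc |v x - lam| ≤ |v x - v y| + |v y - lam| := abs_sub_le _ _ _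
    _ ≤ K * dist x y + |v y - lam| := by
        gcongr
        rw [← Real.dist_eq]
        exact hv.dist_le_mul x hx y hy
    _ < (K + 1) * δ ^ m := by nlinarith [K.coe_nonneg]

theorem IsCompact.exists_forall_exists_le_abs {X ι : Type*} [PseudoMetricSpace X] {K : Set X}
    (hK : IsCompact K) {N : Finset ι} {f : ι → X → ℝ} (hf : ∀ n ∈ N, ContinuousOn (f n) K)
    (hne : ∀ x ∈ K, ∃ n ∈ N, f n x ≠ 0) :
    ∃ c > 0, ∃ d > 0, ∀ x ∈ K, ∃ n ∈ N, ∀ y ∈ K ∩ ball x d, c ≤ |f n y| := by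
  obtain ⟨c₀, hc₀, hsum⟩ := hK.exists_forall_le'
    (continuousOn_finsetSum N fun n hn => (hf n hn).abs) fun x hx => by
      obtain ⟨n, hn, hnx⟩ := hne x hx
      exact sum_pos' (fun _ _ => abs_nonneg _) ⟨n, hn, abs_pos.2 hnx⟩
  -- the `+ 1` keeps `a` positive when `N = ∅`
  set a := c₀ / (#N + 1)
  have ha : 0 < a := by positivity
  have hbig (x) (hx : x ∈ K) : ∃ n ∈ N, a ≤ |f n x| := by
    obtain ⟨n, hn, -⟩ := hne x hx
    refine exists_le_of_sum_le ⟨n, hn⟩ (le_trans ?_ (hsum x hx))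
    rw [sum_const, nsmul_eq_mul]
    calc #N * a ≤ (#N + 1) * a := by gcongr; linarith
      _ = c₀ := mul_div_cancel₀ _ (by positivity)
  obtain ⟨d, hd, hunif⟩ := Metric.uniformContinuousOn_iff.1
    (hK.uniformContinuousOn_of_continuous (continuousOn_pi.2 fun n : N => hf n n.2)) (a / 2)
    (half_pos ha)
  refine ⟨a / 2, half_pos ha, d, hd, fun x hx => ?_⟩
  obtain ⟨n, hn, hnx⟩ := hbig x hx
  refine ⟨n, hn, fun y ⟨hy, hyx⟩ => ?_⟩
  have := (dist_le_pi_dist _ _ (⟨n, hn⟩ : N)).trans_lt (hunif y hy x hx hyx)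
  rw [Real.dist_eq] at this
  linarith [abs_sub_abs_le_abs_sub (f n x) (f n y), abs_sub_comm (f n x) (f n y)]

theorem GoodProfile.exists_volume_setOf_abs_sub_lt_le {R : ℝ} {m : ℕ} {v : ℝ → ℝ} (hR : 0 < R)
    (hv : GoodProfile R m v) (A : ℝ) :
    ∃ C > 0, ∀ lam δ : ℝ, 0 < δ → δ ≤ 1 →
      volume {x ∈ Icc 0 R | |v x - lam| < A * δ ^ m} ≤ ENNReal.ofReal (C * δ) := by
  obtain ⟨hv, hnd⟩ := hv
  have hI : UniqueDiffOn ℝ (Icc 0 R) := uniqueDiffOn_Icc hR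
  obtain ⟨c, hc, d, hd, hloc⟩ := isCompact_Icc.exists_forall_exists_le_abs (N := Finset.Icc 1 m)
    (fun n hn => hv.continuousOn_iteratedDerivWithin (by exact_mod_cast (mem_Icc.1 hn).2) hI)
    fun x hx => by simpa using exists_ne_zero_of_sum_ne_zero (hnd x hx)
  obtain ⟨t, htI, hcover⟩ := isCompact_Icc.elim_nhds_subcover (fun x : ℝ => ball x d)
    fun x _ => ball_mem_nhds x hd
  set B := max 1 (A / c)
  refine ⟨(#t + 1) * (4 ^ m * B), by positivity, fun lam δ hδ hδ1 => ?_⟩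
  have hpiece (x) (hx : x ∈ t) : volume {y ∈ Icc 0 R ∩ ball x d | |v y - lam| < A * δ ^ m}
      ≤ ENNReal.ofReal (4 ^ m * B * δ) := by
    obtain ⟨n, hn, hvn⟩ := hloc x (htI x hx)
    rw [Real.ball_eq_Ioo] at hvn ⊢
    exact hv.volume_setOf_abs_sub_lt_le hI (ordConnected_Icc.inter ordConnected_Ioo)
      inter_subset_left (mem_Icc.1 hn).1 (mem_Icc.1 hn).2 hc hvn lam (le_max_left _ _)
      ((div_le_iff₀' hc).1 (le_max_right _ _)) hδ hδ1
  calc volume {x ∈ Icc 0 R | |v x - lam| < A * δ ^ m}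
      ≤ volume (⋃ x ∈ t, {y ∈ Icc 0 R ∩ ball x d | |v y - lam| < A * δ ^ m}) := by
        refine measure_mono fun y ⟨hyI, hyv⟩ => ?_
        obtain ⟨x, hx, hyx⟩ := mem_iUnion₂.1 (hcover hyI)
        exact mem_iUnion₂.2 ⟨x, hx, ⟨hyI, hyx⟩, hyv⟩
    _ ≤ ∑ x ∈ t, ENNReal.ofReal (4 ^ m * B * δ) :=
        (measure_biUnion_finset_le _ _).trans (sum_le_sum hpiece)
    _ ≤ ENNReal.ofReal ((#t + 1) * (4 ^ m * B) * δ) := by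
        rw [sum_const, nsmul_eq_mul, ← ENNReal.ofReal_natCast,
          ← ENNReal.ofReal_mul (by positivity)]
        refine ENNReal.ofReal_le_ofReal ?_
        nlinarith [show 0 ≤ 4 ^ m * B * δ by positivity]

/-- The Lebesgue measure of the neighbourhood `E_{λ,δ}` of the level sets is `O(δ)`. -/
theorem measure_level_set_nbhd
    (R : ℝ) (hR : 0 < R) (m : ℕ) (hm : 1 ≤ m) (v : ℝ → ℝ) (hv : GoodProfile R m v) :
    ∃ C₀ δ₀ : ℝ, 0 < C₀ ∧ 0 < δ₀ ∧
      ∀ lam : ℝ, ∀ δ ∈ Set.Ioc (0 : ℝ) δ₀,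
        volume (Eset R m v lam δ) ≤ ENNReal.ofReal (C₀ * δ) := by
  obtain ⟨K, hK⟩ := hv.1.exists_lipschitzOnWith (by exact_mod_cast (by omega : m ≠ 0))
    (convex_Icc 0 R) isCompact_Icc
  obtain ⟨C, hC, hsublevel⟩ := hv.exists_volume_setOf_abs_sub_lt_le hR (K + 1)
  exact ⟨C, 1, hC, one_pos, fun lam δ hδ =>
    (measure_mono (eset_subset_of_lipschitzOnWith hK lam δ)).trans (hsublevel lam δ hδ.1 hδ.2)⟩

end
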